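/- arXiv:2012.14203 — 2 statements merged into one kernel-verified Lean document; each statement's English description precedes it below -/
import Mathlib

section
/- Let h ∈ C²((0,+∞)) ∩ C([0,+∞)) be such that h''(r) > 0 for all r > 0 and lim_{r→+∞} h(r)/r^γ = k/(γ−1) for some constants k > 0 and γ ≥ 2. Let 0 < δ ≤ M < +∞. Then there exists a positive constant C such that h(r|r̄) ≥ C |r − r̄|² for every r ∈ [0,+∞) and every r̄ ∈ [δ,M]. -/
/-!
Since `h'' > 0` on `(0, ∞)` and `h` is continuous at `0`, `h` is convex on `[0, ∞)`; hence for
fixed `r̄` the function `r ↦ h(r|r̄)` is convex, nonnegative and vanishes at `r̄`, so it decreases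
on `[0, r̄]`. On a compact interval `[δ/2, R]` we have `h'' ≥ m > 0`, which gives
`h(r|r̄) ≥ m/2 |r - r̄|²` there. For `r ≤ δ/2` the decrease reduces the bound to `r = δ/2`, at the
cost of a factor `4` since `|r - r̄| ≤ 2 |δ/2 - r̄|`. For `r ≥ R` the growth `h(r) ≳ r^γ ≥ r²`
dominates `h(r̄) + h'(r̄)(r - r̄)`, whose coefficients are bounded uniformly in `r̄ ∈ [δ, M]`.
-/

/-- The relative quantity `F(r|r̄) := F(r) − F(r̄) − F′(r̄)(r − r̄)`. -/
noncomputable def relQuant (F : ℝ → ℝ) (r rb : ℝ) : ℝ := F r - F rb - deriv F rb * (r - rb)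

open Set Filter Topology

lemma relQuant_self (f : ℝ → ℝ) (x : ℝ) : relQuant f x x = 0 := by
  simp [relQuant]

lemma relQuant_sub_mul_sq {f : ℝ → ℝ} {x : ℝ} (hf : DifferentiableAt ℝ f x) (c y : ℝ) :
    relQuant (fun z => f z - c * z ^ 2) y x = relQuant f y x - c * (y - x) ^ 2 := by
  have hd : HasDerivAt (fun z => f z - c * z ^ 2) (deriv f x - c * (2 * x)) x := by
    simpa using hf.hasDerivAt.fun_sub ((hasDerivAt_pow 2 x).const_mul c)
  simp only [relQuant, hd.deriv]
  ring

namespace ConvexOn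

variable {f : ℝ → ℝ} {S : Set ℝ} {x : ℝ}

lemma relQuant_nonneg (hf : ConvexOn ℝ S f) (hx : x ∈ S) (hfx : DifferentiableAt ℝ f x)
    {y : ℝ} (hy : y ∈ S) : 0 ≤ relQuant f y x := by
  rcases lt_trichotomy x y with hxy | rfl | hyx
  · have := hf.deriv_le_slope hx hy hxy hfx
    rw [slope_def_field, le_div_iff₀ (sub_pos.2 hxy)] at this
    unfold relQuant
    linarith
  · rw [relQuant_self]
  · have := hf.slope_le_deriv hy hx hyx hfx
    rw [slope_def_field, div_le_iff₀ (sub_pos.2 hyx)] at this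
    unfold relQuant
    linarith

protected lemma relQuant (hf : ConvexOn ℝ S f) (x : ℝ) : ConvexOn ℝ S (relQuant f · x) := by
  refine ⟨hf.1, fun a ha b hb α β hα hβ hαβ => ?_⟩
  have := hf.2 ha hb hα hβ hαβ
  simp only [relQuant, smul_eq_mul] at this ⊢
  obtain rfl : β = 1 - α := by linarith
  linear_combination this

lemma antitoneOn_relQuant (hf : ConvexOn ℝ S f) (hx : x ∈ S) (hfx : DifferentiableAt ℝ f x) :
    AntitoneOn (relQuant f · x) (S ∩ Iic x) := by
  intro r hr s hs hrs
  have hseg : s ∈ segment ℝ r x := by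
    rw [segment_eq_Icc hr.2]
    exact ⟨hrs, hs.2⟩
  have := (hf.relQuant x).le_on_segment hr.1 hx hseg
  rwa [relQuant_self, max_eq_left (hf.relQuant_nonneg hx hfx hr.1)] at this

end ConvexOn

lemma mul_sq_le_relQuant_of_le_deriv2 {f : ℝ → ℝ} {D : Set ℝ} {m : ℝ} (hD : Convex ℝ D)
    (hf : ∀ x ∈ D, DifferentiableAt ℝ f x) (hf' : ∀ x ∈ D, DifferentiableAt ℝ (deriv f) x)
    (hm : ∀ x ∈ D, m ≤ deriv (deriv f) x) {x y : ℝ} (hx : x ∈ D) (hy : y ∈ D) :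
    m / 2 * (y - x) ^ 2 ≤ relQuant f y x := by
  have hd : ∀ z ∈ D, HasDerivAt (fun z => f z - m / 2 * z ^ 2) (deriv f z - m * z) z :=
    fun z hz => ((hf z hz).hasDerivAt.fun_sub
      ((hasDerivAt_pow 2 z).const_mul (m / 2))).congr_deriv (by ring)
  have hd' : ∀ z ∈ D, HasDerivAt (fun z => deriv f z - m * z) (deriv (deriv f) z - m) z :=
    fun z hz => by simpa using (hf' z hz).hasDerivAt.fun_sub ((hasDerivAt_id z).const_mul m)
  have hconvex : ConvexOn ℝ D (fun z => f z - m / 2 * z ^ 2) :=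
    convexOn_of_hasDerivWithinAt2_nonneg hD
      (fun z hz => (hd z hz).continuousAt.continuousWithinAt)
      (fun z hz => (hd z (interior_subset hz)).hasDerivWithinAt)
      (fun z hz => (hd' z (interior_subset hz)).hasDerivWithinAt)
      (fun z hz => sub_nonneg.2 (hm z (interior_subset hz)))
  have := hconvex.relQuant_nonneg hx ((hf x hx).sub (by fun_prop)) hy
  rw [relQuant_sub_mul_sq (hf x hx)] at this
  linarith

lemma exists_pos_mul_sq_le_relQuant_Icc {f : ℝ → ℝ} {U : Set ℝ} {a b : ℝ} (hU : IsOpen U)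
    (hab : Icc a b ⊆ U) (hf : ContDiffOn ℝ 2 f U)
    (hf'' : ∀ x ∈ Icc a b, 0 < deriv (deriv f) x) :
    ∃ m > 0, ∀ x ∈ Icc a b, ∀ y ∈ Icc a b, m / 2 * (y - x) ^ 2 ≤ relQuant f y x := by
  have hC1 : ContDiffOn ℝ 1 (deriv f) U := hf.deriv_of_isOpen hU (by norm_num)
  obtain ⟨m, hm, hmf⟩ := isCompact_Icc.exists_forall_le'
    ((hC1.continuousOn_deriv_of_isOpen hU le_rfl).mono hab) hf''
  refine ⟨m, hm, fun x hx y hy => mul_sq_le_relQuant_of_le_deriv2 (convex_Icc a b) ?_ ?_ hmf hx hy⟩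
  · exact fun z hz => (hf.differentiableOn two_ne_zero).differentiableAt (hU.mem_nhds (hab hz))
  · exact fun z hz => (hC1.differentiableOn one_ne_zero).differentiableAt (hU.mem_nhds (hab hz))

lemma ConvexOn.mul_sq_le_relQuant_of_le {f : ℝ → ℝ} {m s x r : ℝ}
    (hf : ConvexOn ℝ (Ici 0) f) (hfx : DifferentiableAt ℝ f x) (hm : 0 ≤ m) (hs : 0 ≤ s)
    (hsx : 2 * s ≤ x) (hquad : m / 2 * (s - x) ^ 2 ≤ relQuant f s x) (hr : 0 ≤ r)
    (hrs : r ≤ s) : m / 8 * (r - x) ^ 2 ≤ relQuant f r x := by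
  have hsq : (r - x) ^ 2 ≤ 4 * (s - x) ^ 2 := by nlinarith
  calc m / 8 * (r - x) ^ 2 ≤ m / 2 * (s - x) ^ 2 := by nlinarith
    _ ≤ relQuant f s x := hquad
    _ ≤ relQuant f r x :=
      hf.antitoneOn_relQuant (by simp only [mem_Ici]; linarith) hfx
        ⟨hr, by simp only [mem_Iic]; linarith⟩ ⟨hs, by simp only [mem_Iic]; linarith⟩ hrs

lemma eventually_mul_sq_le_of_tendsto_div_rpow {f : ℝ → ℝ} {γ L : ℝ} (hγ : 2 ≤ γ) (hL : 0 < L)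
    (hlim : Tendsto (fun r => f r / r ^ γ) atTop (𝓝 L)) :
    ∀ᶠ r in atTop, L / 2 * r ^ 2 ≤ f r := by
  filter_upwards [hlim.eventually_const_le (half_lt_self hL), eventually_ge_atTop 1]
    with r hfr hr
  calc L / 2 * r ^ 2 = L / 2 * r ^ (2 : ℝ) := by norm_cast
    _ ≤ L / 2 * r ^ γ := by gcongr
    _ ≤ f r := (le_div_iff₀ (by positivity)).1 hfr

lemma mul_sq_le_relQuant_of_mul_sq_le {f : ℝ → ℝ} {c A B r x : ℝ} (hfr : c * r ^ 2 ≤ f r)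
    (hA : |f x| ≤ A) (hB : |deriv f x| ≤ B) (hx : 0 ≤ x) (hxr : x ≤ r) (hr : 1 ≤ r)
    (hAB : 2 * (A + B) ≤ c * r) : c / 2 * (r - x) ^ 2 ≤ relQuant f r x := by
  obtain ⟨-, hA₂⟩ := abs_le.1 hA
  obtain ⟨-, hB₂⟩ := abs_le.1 hB
  have hA₀ : 0 ≤ A := (abs_nonneg _).trans hA
  have hB₀ : 0 ≤ B := (abs_nonneg _).trans hB
  have hc : 0 ≤ c := by nlinarith
  have h₁ : deriv f x * (r - x) ≤ B * r := by nlinarith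
  have h₂ : c / 2 * (r - x) ^ 2 ≤ c / 2 * r ^ 2 := by gcongr; linarith
  have h₃ : A ≤ A * r := le_mul_of_one_le_right hA₀ hr
  have h₄ : 2 * (A + B) * r ≤ c * r * r := by gcongr
  unfold relQuant
  nlinarith

lemma eventually_mul_sq_le_relQuant {f : ℝ → ℝ} {c : ℝ} (hc : 0 < c) {K : Set ℝ}
    (hK : IsCompact K) (hK₀ : K ⊆ Ici 0) (hf : ContinuousOn f K) (hf' : ContinuousOn (deriv f) K)
    (hgrowth : ∀ᶠ r in atTop, c * r ^ 2 ≤ f r) :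
    ∀ᶠ r in atTop, ∀ x ∈ K, c / 2 * (r - x) ^ 2 ≤ relQuant f r x := by
  obtain ⟨A, hA⟩ := hK.exists_bound_of_continuousOn hf
  obtain ⟨B, hB⟩ := hK.exists_bound_of_continuousOn hf'
  obtain ⟨b, hb⟩ := hK.bddAbove
  filter_upwards [hgrowth, eventually_ge_atTop 1, eventually_ge_atTop b,
    eventually_ge_atTop (2 * (A + B) / c)] with r hfr hr₁ hrb hrAB x hx
  exact mul_sq_le_relQuant_of_mul_sq_le hfr (hA x hx) (hB x hx) (hK₀ hx) ((hb hx).trans hrb) hr₁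
    ((div_le_iff₀' hc).1 hrAB)

theorem relative_energy_quadratic_lower_bound_general (h : ℝ → ℝ) (k γ δ M : ℝ)
    (hk : 0 < k) (hγ : 2 ≤ γ)
    (hC2 : ContDiffOn ℝ 2 h (Set.Ioi 0)) (hC0 : ContinuousOn h (Set.Ici 0))
    (hconv : ∀ r > (0 : ℝ), 0 < deriv (deriv h) r)
    (hlim : Filter.Tendsto (fun r : ℝ => h r / r ^ γ) Filter.atTop (nhds (k / (γ - 1))))
    (hδ : 0 < δ) :
    ∃ C > (0 : ℝ), ∀ r ∈ Set.Ici (0 : ℝ), ∀ rb ∈ Set.Icc δ M,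
      C * |r - rb| ^ 2 ≤ relQuant h r rb := by
  have hd₁ : DifferentiableOn ℝ h (Ioi 0) := hC2.differentiableOn two_ne_zero
  have hd₂ : DifferentiableOn ℝ (deriv h) (Ioi 0) :=
    (hC2.deriv_of_isOpen isOpen_Ioi (by norm_num)).differentiableOn one_ne_zero
  have hconvex : ConvexOn ℝ (Ici 0) h :=
    convexOn_of_deriv2_nonneg (convex_Ici 0) hC0 (by rwa [interior_Ici]) (by rwa [interior_Ici])
      (by simpa using fun x hx => (hconv x hx).le)
  have hL : 0 < k / (γ - 1) := div_pos hk (by linarith)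
  have hpos : Icc δ M ⊆ Ioi 0 := fun x hx => hδ.trans_le hx.1
  have hfar := eventually_mul_sq_le_relQuant (half_pos hL) isCompact_Icc
    (fun x hx => mem_Ici.2 (hpos hx).le) (hd₁.continuousOn.mono hpos) (hd₂.continuousOn.mono hpos)
    (eventually_mul_sq_le_of_tendsto_div_rpow hγ hL hlim)
  obtain ⟨R, hR⟩ := eventually_atTop.1 (hfar.and (eventually_ge_atTop M))
  have hmid : Icc (δ / 2) R ⊆ Ioi 0 := fun x hx => (half_pos hδ).trans_le hx.1
  obtain ⟨m, hm, hnear⟩ := exists_pos_mul_sq_le_relQuant_Icc isOpen_Ioi hmid hC2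
    (fun x hx => hconv x (hmid hx))
  refine ⟨min (m / 8) (k / (γ - 1) / 2 / 2), by positivity, fun r hr rb hrb => ?_⟩
  have hrb' : rb ∈ Icc (δ / 2) R := ⟨by linarith [hrb.1], hrb.2.trans (hR R le_rfl).2⟩
  rw [sq_abs]
  rcases le_or_gt r (δ / 2) with hr₁ | hr₁
  · refine (mul_le_mul_of_nonneg_right (min_le_left _ _) (sq_nonneg _)).trans ?_
    exact hconvex.mul_sq_le_relQuant_of_le (hd₁.differentiableAt (Ioi_mem_nhds (hpos hrb)))
      hm.le (half_pos hδ).le (by linarith [hrb.1])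
      (hnear rb hrb' _ ⟨le_rfl, hrb'.1.trans hrb'.2⟩) hr hr₁
  rcases le_or_gt r R with hr₂ | hr₂
  · refine (mul_le_mul_of_nonneg_right ((min_le_left _ _).trans ?_) (sq_nonneg _)).trans
      (hnear rb hrb' r ⟨hr₁.le, hr₂⟩)
    linarith
  · exact (mul_le_mul_of_nonneg_right (min_le_right _ _) (sq_nonneg _)).trans
      ((hR r hr₂.le).1 rb hrb)

/-- If `h` is `C²` and strictly convex on `(0,∞)`, continuous on `[0,∞)`, with
`h(r)/r^γ → k/(γ−1)` as `r → ∞` for some `k > 0` and `γ ≥ 2`, and `0 < δ ≤ M`, then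
there exists `C > 0` with `h(r|r̄) ≥ C|r−r̄|²` for all `r ≥ 0` and `r̄ ∈ [δ,M]`. -/
theorem relative_energy_quadratic_lower_bound (h : ℝ → ℝ) (k γ δ M : ℝ)
    (hk : 0 < k) (hγ : 2 ≤ γ)
    (hC2 : ContDiffOn ℝ 2 h (Set.Ioi 0)) (hC0 : ContinuousOn h (Set.Ici 0))
    (hconv : ∀ r > (0 : ℝ), 0 < deriv (deriv h) r)
    (hlim : Filter.Tendsto (fun r : ℝ => h r / r ^ γ) Filter.atTop (nhds (k / (γ - 1))))
    (hδ : 0 < δ) (hδM : δ ≤ M) :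
    ∃ C > (0 : ℝ), ∀ r ∈ Set.Ici (0 : ℝ), ∀ rb ∈ Set.Icc δ M,
      C * |r - rb| ^ 2 ≤ relQuant h r rb :=
  relative_energy_quadratic_lower_bound_general h k γ δ M hk hγ hC2 hC0 hconv hlim hδ
end

section
/- Let p, h ∈ C²((0,+∞)) satisfy the thermodynamic consistency relation r h''(r) = p'(r) for all r > 0, and suppose p'(r) > 0 and |p''(r)| ≤ k̂ p'(r)/r for all r > 0, where k̂ > 0 is a constant. Then for all r, r̄ > 0, the relative pressure is dominated by the relative internal energy: p(r|r̄) ≤ k̂ h(r|r̄). -/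
open Set

lemma relQuant_const_mul (F : ℝ → ℝ) (c r rb : ℝ) :
    relQuant (fun x => c * F x) r rb = c * relQuant F r rb := by
  simp only [relQuant, deriv_const_mul_field']
  ring

lemma relQuant_sub {F G : ℝ → ℝ} {rb : ℝ} (hF : DifferentiableAt ℝ F rb)
    (hG : DifferentiableAt ℝ G rb) (r : ℝ) :
    relQuant (fun x => F x - G x) r rb = relQuant F r rb - relQuant G r rb := by
  simp only [relQuant, deriv_fun_sub hF hG]
  ring

lemma ConvexOn.relQuant_nonneg_s5 {S : Set ℝ} {F : ℝ → ℝ} (hF : ConvexOn ℝ S F) {r rb : ℝ}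
    (hr : r ∈ S) (hrb : rb ∈ S) (hd : DifferentiableAt ℝ F rb) : 0 ≤ relQuant F r rb := by
  rw [relQuant, sub_sub, sub_nonneg]
  rcases lt_trichotomy rb r with hlt | rfl | hgt
  · have hslope := hF.deriv_le_slope hrb hr hlt hd
    rw [slope_def_field, le_div_iff₀ (sub_pos.2 hlt)] at hslope
    linarith
  · simp
  · have hslope := hF.slope_le_deriv hr hrb hgt hd
    rw [slope_def_field, div_le_iff₀ (sub_pos.2 hgt)] at hslope
    linarith

section ContDiffOn

variable {F : ℝ → ℝ} {s : Set ℝ} {n : WithTop ℕ∞} {x : ℝ}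

lemma ContDiffOn.hasDerivAt_deriv (hF : ContDiffOn ℝ n F s) (hn : n ≠ 0) (hs : IsOpen s)
    (hx : x ∈ s) : HasDerivAt F (deriv F x) x :=
  ((hF.differentiableOn hn x hx).differentiableAt (hs.mem_nhds hx)).hasDerivAt

lemma ContDiffOn.hasDerivAt_deriv_deriv (hF : ContDiffOn ℝ n F s) (hn : 2 ≤ n) (hs : IsOpen s)
    (hx : x ∈ s) : HasDerivAt (deriv F) (deriv (deriv F) x) x :=
  (hF.deriv_of_isOpen hs (m := 1) hn).hasDerivAt_deriv one_ne_zero hs hx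

end ContDiffOn

lemma convexOn_const_mul_sub_of_deriv2_le {D : Set ℝ} (hD : Convex ℝ D) (hDo : IsOpen D)
    {p h : ℝ → ℝ} {k : ℝ} (hp : ContDiffOn ℝ 2 p D) (hh : ContDiffOn ℝ 2 h D)
    (hle : ∀ x ∈ D, deriv (deriv p) x ≤ k * deriv (deriv h) x) :
    ConvexOn ℝ D (fun x => k * h x - p x) := by
  have hg' : ∀ x ∈ D, HasDerivAt (fun x => k * h x - p x) (k * deriv h x - deriv p x) x :=
    fun x hx => ((hh.hasDerivAt_deriv two_ne_zero hDo hx).const_mul k).sub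
      (hp.hasDerivAt_deriv two_ne_zero hDo hx)
  have hg'' : ∀ x ∈ D, HasDerivAt (fun x => k * deriv h x - deriv p x)
      (k * deriv (deriv h) x - deriv (deriv p) x) x :=
    fun x hx => ((hh.hasDerivAt_deriv_deriv le_rfl hDo hx).const_mul k).sub
      (hp.hasDerivAt_deriv_deriv le_rfl hDo hx)
  exact convexOn_of_hasDerivWithinAt2_nonneg hD
    (fun x hx => (hg' x hx).continuousAt.continuousWithinAt)
    (fun x hx => (hg' x (interior_subset hx)).hasDerivWithinAt)
    (fun x hx => (hg'' x (interior_subset hx)).hasDerivWithinAt)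
    (fun x hx => sub_nonneg.2 (hle x (interior_subset hx)))

theorem relative_pressure_le_relative_energy_general (p h : ℝ → ℝ) (khat : ℝ)
    (hpC2 : ContDiffOn ℝ 2 p (Set.Ioi 0)) (hhC2 : ContDiffOn ℝ 2 h (Set.Ioi 0))
    (hthermo : ∀ r > (0 : ℝ), r * deriv (deriv h) r = deriv p r)
    (hp'' : ∀ r > (0 : ℝ), |deriv (deriv p) r| ≤ khat * deriv p r / r) :
    ∀ r > (0 : ℝ), ∀ rb > (0 : ℝ), relQuant p r rb ≤ khat * relQuant h r rb := by
  intro r hr rb hrb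
  have hp''_le : ∀ x ∈ Ioi (0 : ℝ), deriv (deriv p) x ≤ khat * deriv (deriv h) x := by
    intro x (hx : 0 < x)
    calc deriv (deriv p) x ≤ khat * deriv p x / x := (le_abs_self _).trans (hp'' x hx)
      _ = khat * deriv (deriv h) x := by rw [← hthermo x hx]; field_simp
  have hconv := convexOn_const_mul_sub_of_deriv2_le (convex_Ioi 0) isOpen_Ioi hpC2 hhC2 hp''_le
  have hpd := (hpC2.hasDerivAt_deriv two_ne_zero isOpen_Ioi hrb).differentiableAt
  have hhd := (hhC2.hasDerivAt_deriv two_ne_zero isOpen_Ioi hrb).differentiableAt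
  have hnonneg := hconv.relQuant_nonneg_s5 hr hrb ((hhd.const_mul khat).sub hpd)
  rw [relQuant_sub (hhd.const_mul khat) hpd, relQuant_const_mul] at hnonneg
  linarith

/-- If `p, h` are `C²` on `(0,∞)` with `r h''(r) = p'(r)`, `p'(r) > 0` and
`|p''(r)| ≤ k̂ p'(r)/r` for all `r > 0`, then the relative pressure is dominated by
the relative internal energy: `p(r|r̄) ≤ k̂ h(r|r̄)` for all `r, r̄ > 0`. -/
theorem relative_pressure_le_relative_energy (p h : ℝ → ℝ) (khat : ℝ) (hkhat : 0 < khat)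
    (hpC2 : ContDiffOn ℝ 2 p (Set.Ioi 0)) (hhC2 : ContDiffOn ℝ 2 h (Set.Ioi 0))
    (hthermo : ∀ r > (0 : ℝ), r * deriv (deriv h) r = deriv p r)
    (hp' : ∀ r > (0 : ℝ), 0 < deriv p r)
    (hp'' : ∀ r > (0 : ℝ), |deriv (deriv p) r| ≤ khat * deriv p r / r) :
    ∀ r > (0 : ℝ), ∀ rb > (0 : ℝ), relQuant p r rb ≤ khat * relQuant h r rb :=
  relative_pressure_le_relative_energy_general p h khat hpC2 hhC2 hthermo hp''
end
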